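/- Let (e_n) be a normalised unconditional Schauder basis of a Banach space X such that every block subspace [x_n] is complemented by a projection P of the form Pz = Σ x*_n(z) x_n with supp x*_n ⊆ supp x_n. Then any two normalised block sequences (x_n) and (y_n) of (e_n) satisfying x_1 < y_1 < x_2 < y_2 < ... (i.e., max supp x_n < min supp y_n < min supp x_{n+1}) are equivalent, meaning Σ a_n x_n converges if and only if Σ a_n y_n converges. -/

import Mathlib

open Filter Topology

noncomputable section

structure SchauderBasisOld (X : Type*) [NormedAddCommGroup X] [NormedSpace ℝ X] where
  e : ℕ → X
  coord : ℕ → X →L[ℝ] ℝ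
  biorth : ∀ n m, coord n (e m) = if n = m then 1 else 0
  expansion : ∀ x : X,
    Filter.Tendsto (fun N => ∑ n ∈ Finset.range N, coord n x • e n) Filter.atTop (nhds x)
  normalised : ∀ n, ‖e n‖ = 1

section Defs

variable {X Y : Type*} [NormedAddCommGroup X] [NormedSpace ℝ X]
  [NormedAddCommGroup Y] [NormedSpace ℝ Y]

/-- Convergence of the series `∑ x n` (of partial sums). -/
def Converges (x : ℕ → X) : Prop :=
  ∃ s, Filter.Tendsto (fun N => ∑ n ∈ Finset.range N, x n) Filter.atTop (nhds s)

/-- Two sequences are equivalent if the same scalar series converge. -/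
def SeqEquiv (x : ℕ → X) (y : ℕ → Y) : Prop :=
  ∀ a : ℕ → ℝ, Converges (fun n => a n • x n) ↔ Converges (fun n => a n • y n)

/-- `C`-equivalence of two sequences. -/
def CEquiv (C : ℝ) (x : ℕ → X) (y : ℕ → Y) : Prop :=
  ∀ (a : ℕ → ℝ) (N : ℕ),
    C⁻¹ * ‖∑ n ∈ Finset.range N, a n • y n‖ ≤ ‖∑ n ∈ Finset.range N, a n • x n‖ ∧
    ‖∑ n ∈ Finset.range N, a n • x n‖ ≤ C * ‖∑ n ∈ Finset.range N, a n • y n‖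

/-- A basic sequence: uniformly bounded partial-sum projections. -/
def IsBasicSeq (x : ℕ → X) : Prop :=
  ∃ K, 1 ≤ K ∧ ∀ (a : ℕ → ℝ) (m n : ℕ), m ≤ n →
    ‖∑ i ∈ Finset.range m, a i • x i‖ ≤ K * ‖∑ i ∈ Finset.range n, a i • x i‖

/-- A sequence of signs. -/
def IsSigns (θ : ℕ → ℝ) : Prop := ∀ n, θ n = 1 ∨ θ n = -1

end Defs

namespace SchauderBasisOld

variable {X : Type*} [NormedAddCommGroup X] [NormedSpace ℝ X] (b : SchauderBasisOld X)

/-- Support of a vector with respect to the basis. -/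
def supp (x : X) : Set ℕ := {n | b.coord n x ≠ 0}

/-- A normalised block sequence of the basis. -/
def IsBlockSeq (x : ℕ → X) : Prop :=
  (∀ n, ‖x n‖ = 1) ∧ (∀ n, (b.supp (x n)).Finite) ∧
  ∀ n, ∀ i ∈ b.supp (x n), ∀ j ∈ b.supp (x (n+1)), i < j

/-- Unconditionality of the basis. -/
def Unconditional : Prop :=
  ∀ θ : ℕ → ℝ, IsSigns θ → SeqEquiv (fun n => θ n • b.e n) b.e

/-- 1-unconditionality (finite-sum form). -/
def OneUnconditional : Prop :=
  ∀ (θ a : ℕ → ℝ), IsSigns θ → ∀ N,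
    ‖∑ n ∈ Finset.range N, (θ n * a n) • b.e n‖ ≤ ‖∑ n ∈ Finset.range N, a n • b.e n‖

/-- The shift property: every normalised block sequence is equivalent to its shift. -/
def ShiftProperty : Prop :=
  ∀ x : ℕ → X, b.IsBlockSeq x → SeqEquiv x (fun n => x (n+1))

/-- The basis is shrinking. -/
def Shrinking : Prop :=
  ∀ f : X →L[ℝ] ℝ, Filter.Tendsto
    (fun n => sSup ((fun y => |f y|) ''
      {y | y ∈ Submodule.span ℝ (Set.range fun i => b.e (n + i)) ∧ ‖y‖ ≤ 1}))
    Filter.atTop (nhds 0)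

/-- The basis is boundedly complete. -/
def BoundedlyComplete : Prop :=
  ∀ a : ℕ → ℝ, (∃ M, ∀ N, ‖∑ i ∈ Finset.range N, a i • b.e i‖ ≤ M) →
    Converges (fun i => a i • b.e i)

end SchauderBasisOld

/-!
If `∑ a n • x n` converges, then so does `∑ (u n * a n) • x n` for some `u n → ∞`. With
`t n = (u n)⁻¹ ≤ 1 / 2`, the normalised vectors `w n = ‖x n + t n • y n‖⁻¹ • (x n + t n • y n)` form
a block sequence. The functionals `f n` of its projection are uniformly bounded (Banach–Steinhaus)
and kill `x m` for `m ≠ n`, so the projection maps the sum of `∑ (u n * a n) • x n` to that of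
`∑ (u n * a n * f n (x n)) • w n`; projecting further onto `[y n]` gives a convergent series
`∑ (a n * f n (x n) / ‖x n + t n • y n‖) • y n`. Since `f n (w n) = 1` and `t n → 0`, the factor
`f n (x n) / ‖x n + t n • y n‖` is eventually bounded away from `0`, and unconditionality of the
basis lets us divide it out. The interlacing condition is symmetric enough to swap `x` and `y`.
-/

section Series

variable {X : Type*} [NormedAddCommGroup X]

theorem Converges.add {v w : ℕ → X} (hv : Converges v) (hw : Converges w) :
    Converges fun n => v n + w n := by
  obtain ⟨s, hs⟩ := hv
  obtain ⟨t, ht⟩ := hw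
  exact ⟨s + t, by simpa only [Finset.sum_add_distrib] using hs.add ht⟩

theorem HasSum.converges {v : ℕ → X} {s : X} (hv : HasSum v s) : Converges v :=
  ⟨s, hv.tendsto_sum_nat⟩

theorem Converges.congr_eventually {v w : ℕ → X} (hv : Converges v)
    (hvw : ∀ᶠ n in atTop, v n = w n) : Converges w := by
  obtain ⟨N, hN⟩ := eventually_atTop.1 hvw
  have hd : Converges fun n => w n - v n :=
    (hasSum_sum_of_ne_finset_zero (s := Finset.range N) fun n hn => by
      rw [hN n (by simpa using hn), sub_self]).converges
  simpa using hv.add hd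

variable [NormedSpace ℝ X]

theorem Converges.const_smul {v : ℕ → X} (hv : Converges v) (c : ℝ) :
    Converges fun n => c • v n := by
  obtain ⟨s, hs⟩ := hv
  exact ⟨c • s, by simpa only [← Finset.smul_sum] using hs.const_smul c⟩

theorem sum_range_smul_sum_ite_eq (v : ℕ → X) (c : ℕ → ℝ) {N : ℕ → ℕ} (hkN : ∀ k, k ≤ N k)
    (M : ℕ) : ∑ n ∈ Finset.range M, (∑ k ∈ Finset.range (n + 1), if N k ≤ n then c k else 0) • v n =
      ∑ k ∈ Finset.range M, c k • ∑ n ∈ Finset.Ico (N k) M, v n := by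
  have hIco : ∀ k, c k • ∑ n ∈ Finset.Ico (N k) M, v n =
      ∑ n ∈ Finset.range M, if N k ≤ n then c k • v n else 0 := fun k => by
    rw [← Finset.sum_filter, Finset.range_eq_Ico, Finset.Ico_filter_le,
      max_eq_right (Nat.zero_le _), Finset.smul_sum]
  simp_rw [hIco]
  rw [Finset.sum_comm]
  refine Finset.sum_congr rfl fun n hn => ?_
  rw [← Finset.sum_subset (Finset.range_subset_range.2 (Finset.mem_range.1 hn)) fun k _ hk =>
    if_neg (by simp only [Finset.mem_range, not_lt] at hk; have := hkN k; omega), Finset.sum_smul]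
  exact Finset.sum_congr rfl fun k _ => by split_ifs <;> simp

theorem converges_smul_of_tail_bounds [CompleteSpace X] {v : ℕ → X} {s : X}
    (hs : Tendsto (fun N => ∑ n ∈ Finset.range N, v n) atTop (𝓝 s)) {N : ℕ → ℕ}
    (hkN : ∀ k, k ≤ N k) {c ε : ℕ → ℝ} (hc : ∀ k, 0 ≤ c k)
    (hN : ∀ k m, N k ≤ m → ‖∑ n ∈ Finset.range m, v n - s‖ ≤ ε k)
    (hcε : Summable fun k => c k * ε k) :
    Converges fun n => (∑ k ∈ Finset.range (n + 1), if N k ≤ n then c k else 0) • v n := by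
  set S : ℕ → X := fun N => ∑ n ∈ Finset.range N, v n
  have hIco : ∀ M k, N k ≤ M → ∑ n ∈ Finset.Ico (N k) M, v n = S M - S (N k) := fun M k hM =>
    Finset.sum_Ico_eq_sub _ hM
  have hIco0 : ∀ M k, M ≤ N k → ∑ n ∈ Finset.Ico (N k) M, v n = 0 := fun M k hM => by
    rw [Finset.Ico_eq_empty_of_le hM, Finset.sum_empty]
  refine ⟨∑' k, c k • (s - S (N k)), ?_⟩
  simp_rw [sum_range_smul_sum_ite_eq v c hkN]
  refine (tendsto_tsum_of_dominated_convergence (bound := fun k => 2 * (c k * ε k))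
    (f := fun M k => c k • ∑ n ∈ Finset.Ico (N k) M, v n) (hcε.mul_left 2) (fun k => ?_)
    (Eventually.of_forall fun M k => ?_)).congr fun M => tsum_eq_sum fun k hk => by
      rw [hIco0 M k (by simp at hk; linarith [hkN k]), smul_zero]
  · refine ((hs.sub_const (S (N k))).const_smul _).congr' ?_
    filter_upwards [eventually_ge_atTop (N k)] with M hM
    rw [hIco M k hM]
  · rcases le_total (N k) M with hM | hM
    · rw [hIco M k hM, norm_smul, Real.norm_of_nonneg (hc k)]
      calc c k * ‖S M - S (N k)‖ ≤ c k * (ε k + ε k) := by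
            refine mul_le_mul_of_nonneg_left ?_ (hc k)
            calc ‖S M - S (N k)‖ = ‖(S M - s) - (S (N k) - s)‖ := by abel_nf
              _ ≤ _ := (norm_sub_le _ _).trans (add_le_add (hN k M hM) (hN k _ le_rfl))
        _ = 2 * (c k * ε k) := by ring
    · rw [hIco0 M k hM, smul_zero, norm_zero]
      exact mul_nonneg zero_le_two (mul_nonneg (hc k) ((norm_nonneg _).trans (hN k _ le_rfl)))

/-- Take weights `2 ^ k` from the index `N k` on, where the tails of the series are below
`(1 / 4) ^ k`. -/
theorem Converges.exists_tendsto_atTop_smul [CompleteSpace X] {v : ℕ → X} (hv : Converges v) :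
    ∃ u : ℕ → ℝ, Tendsto u atTop atTop ∧ Converges fun n => u n • v n := by
  obtain ⟨s, hs⟩ := hv
  have htail : ∀ k : ℕ, ∃ N, k ≤ N ∧
      ∀ m, N ≤ m → ‖∑ n ∈ Finset.range m, v n - s‖ ≤ (1 / 4) ^ k := by
    intro k
    obtain ⟨N, hN⟩ := eventually_atTop.1 ((tendsto_iff_norm_sub_tendsto_zero.1 hs).eventually
      (ge_mem_nhds (show (0 : ℝ) < (1 / 4) ^ k by positivity)))
    exact ⟨max N k, le_max_right _ _, fun m hm => hN m (le_of_max_le_left hm)⟩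
  choose N hkN hN using htail
  refine ⟨_, tendsto_atTop.2 fun B => ?_, converges_smul_of_tail_bounds hs hkN
    (c := fun k => 2 ^ k) (fun k => by positivity) hN ?_⟩
  · obtain ⟨k, hk⟩ := pow_unbounded_of_one_lt B (by norm_num : (1 : ℝ) < 2)
    filter_upwards [eventually_ge_atTop (N k)] with n hn
    refine hk.le.trans ?_
    have := Finset.single_le_sum (f := fun k => if N k ≤ n then (2 : ℝ) ^ k else 0)
      (fun j _ => by positivity) (Finset.mem_range.2 (Nat.lt_succ_of_le ((hkN k).trans hn)))
    simpa [hn] using this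
  · exact summable_geometric_two.congr fun k => by rw [← mul_pow]; norm_num

end Series

section Multipliers

variable {ι X : Type*} [NormedAddCommGroup X] [NormedSpace ℝ X]

theorem norm_add_smul_le_max (x y : X) {ρ : ℝ} (hρ : ρ ∈ Set.Icc (0 : ℝ) 1) :
    ‖x + ρ • y‖ ≤ max ‖x‖ ‖x + y‖ := by
  obtain ⟨h0, h1⟩ := hρ
  calc ‖x + ρ • y‖ = ‖(1 - ρ) • x + ρ • (x + y)‖ := by congr 1; module
    _ ≤ (1 - ρ) * ‖x‖ + ρ * ‖x + y‖ := by
        refine (norm_add_le _ _).trans_eq ?_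
        rw [norm_smul, norm_smul, Real.norm_of_nonneg (by linarith), Real.norm_of_nonneg h0]
    _ ≤ (1 - ρ) * max ‖x‖ ‖x + y‖ + ρ * max ‖x‖ ‖x + y‖ :=
        add_le_add (mul_le_mul_of_nonneg_left (le_max_left _ _) (by linarith))
          (mul_le_mul_of_nonneg_left (le_max_right _ _) h0)
    _ = max ‖x‖ ‖x + y‖ := by ring

/-- The norm is convex, so on the cube `[0, 1] ^ F` it is maximal at a vertex. -/
theorem exists_subset_norm_add_sum_smul_le (f : ι → X) (ρ : ι → ℝ) (F : Finset ι)
    (hρ : ∀ i ∈ F, ρ i ∈ Set.Icc (0 : ℝ) 1) (w : X) :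
    ∃ G ⊆ F, ‖w + ∑ i ∈ F, ρ i • f i‖ ≤ ‖w + ∑ i ∈ G, f i‖ := by
  classical
  induction F using Finset.induction_on generalizing w with
  | empty => exact ⟨∅, subset_rfl, le_rfl⟩
  | @insert a F ha ih =>
    obtain ⟨G, hGF, hG⟩ := ih (fun i hi => hρ i (Finset.mem_insert_of_mem hi)) (w + ρ a • f a)
    have hmax := norm_add_smul_le_max (w + ∑ i ∈ G, f i) (f a) (hρ a (Finset.mem_insert_self a F))
    have hG' : ‖w + ∑ i ∈ insert a F, ρ i • f i‖ ≤ ‖(w + ∑ i ∈ G, f i) + ρ a • f a‖ := by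
      rw [Finset.sum_insert ha]
      convert hG using 2 <;> abel
    rcases le_max_iff.1 (hG'.trans hmax) with h | h
    · exact ⟨G, hGF.trans (Finset.subset_insert a F), h⟩
    · refine ⟨insert a G, Finset.insert_subset_insert a hGF, h.trans_eq ?_⟩
      rw [Finset.sum_insert fun haG => ha (hGF haG)]
      abel_nf

theorem Summable.smul_of_mem_Icc [CompleteSpace X] {f : ι → X} (hf : Summable f) {ρ : ι → ℝ}
    (hρ : ∀ i, ρ i ∈ Set.Icc (0 : ℝ) 1) : Summable fun i => ρ i • f i := by
  rw [summable_iff_vanishing_norm] at hf ⊢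
  intro ε hε
  obtain ⟨s, hs⟩ := hf ε hε
  refine ⟨s, fun t ht => ?_⟩
  obtain ⟨G, hGt, hG⟩ := exists_subset_norm_add_sum_smul_le f ρ t (fun i _ => hρ i) 0
  rw [zero_add, zero_add] at hG
  exact hG.trans_lt (hs G (ht.mono_left hGt))

theorem Summable.smul_of_abs_le [CompleteSpace X] {f : ι → X} (hf : Summable f) {r : ι → ℝ}
    {M : ℝ} (hr : ∀ i, |r i| ≤ M) : Summable fun i => r i • f i := by
  set M' := |M| + 1
  have hM' : 0 < M' := by positivity
  have hρ : ∀ i, (r i / M' + 1) / 2 ∈ Set.Icc (0 : ℝ) 1 := fun i => by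
    have : |r i / M'| ≤ 1 := by
      rw [abs_div, abs_of_pos hM', div_le_one hM']
      linarith [hr i, le_abs_self M]
    obtain ⟨h1, h2⟩ := abs_le.1 this
    constructor <;> linarith
  have := ((hf.smul_of_mem_Icc hρ).const_smul (2 * M')).sub (hf.const_smul M')
  refine this.congr fun i => ?_
  simp only [smul_smul]
  rw [← sub_smul]
  congr 1
  field_simp
  ring

end Multipliers

section Subseries

variable {X : Type*} [NormedAddCommGroup X] [CompleteSpace X]

/-- Failing the Cauchy criterion for unconditional convergence gives successive finite sets
`T k ⊆ [b k, b (k + 1))` with `ε ≤ ‖∑ i ∈ T k, f i‖`; the subseries over their union is not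
Cauchy. -/
theorem summable_of_forall_converges_indicator {f : ℕ → X}
    (hf : ∀ A : Set ℕ, Converges (A.indicator f)) : Summable f := by
  by_contra hns
  rw [summable_iff_vanishing_norm] at hns
  push Not at hns
  obtain ⟨ε, hε, hbig⟩ := hns
  have hblock : ∀ m, ∃ m', ∃ t : Finset ℕ, t ⊆ Finset.Ico m m' ∧ ε ≤ ‖∑ i ∈ t, f i‖ := by
    intro m
    obtain ⟨t, hdisj, ht⟩ := hbig (Finset.range m)
    refine ⟨t.sup id + 1, t, fun i hi => Finset.mem_Ico.2 ⟨?_, ?_⟩, ht⟩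
    · simpa using Finset.disjoint_left.1 hdisj hi
    · exact Nat.lt_succ_of_le (Finset.le_sup (f := id) hi)
  choose B T hT hTnorm using hblock
  set b : ℕ → ℕ := fun k => B^[k] 0
  have hb : ∀ k, b (k + 1) = B (b k) := fun k => Function.iterate_succ_apply' B k 0
  have hTb : ∀ k, T (b k) ⊆ Finset.Ico (b k) (b (k + 1)) := fun k => hb k ▸ hT (b k)
  have hmono : StrictMono b := strictMono_nat_of_lt_succ fun k => by
    obtain ⟨n, hn⟩ : (T (b k)).Nonempty := Finset.nonempty_iff_ne_empty.2 fun h => by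
      simpa [h] using hε.trans_le (hTnorm (b k))
    have := Finset.mem_Ico.1 (hTb k hn)
    omega
  set A : Set ℕ := ⋃ k, (T (b k) : Set ℕ)
  have hA : ∀ k, ∀ n ∈ Finset.Ico (b k) (b (k + 1)), n ∈ A ↔ n ∈ T (b k) := by
    refine fun k n hn => ⟨fun hnA => ?_, fun h => Set.mem_iUnion.2 ⟨k, h⟩⟩
    obtain ⟨j, hj⟩ := Set.mem_iUnion.1 hnA
    obtain rfl : j = k := by
      have h1 := Finset.mem_Ico.1 (hTb j hj)
      have h2 := Finset.mem_Ico.1 hn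
      by_contra hjk
      rcases Nat.lt_or_gt_of_ne hjk with h | h
      · have := hmono.monotone (show j + 1 ≤ k by omega); omega
      · have := hmono.monotone (show k + 1 ≤ j by omega); omega
    exact hj
  have hchunk : ∀ k, ∑ n ∈ Finset.Ico (b k) (b (k + 1)), A.indicator f n = ∑ n ∈ T (b k), f n := by
    intro k
    rw [← Finset.sum_indicator_subset f (hTb k)]
    refine Finset.sum_congr rfl fun n hn => ?_
    by_cases h : n ∈ T (b k)
    · rw [Set.indicator_of_mem ((hA k n hn).2 h), Set.indicator_of_mem (Finset.mem_coe.2 h)]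
    · rw [Set.indicator_of_notMem (mt (hA k n hn).1 h), Set.indicator_of_notMem (by simpa using h)]
  obtain ⟨s, hs⟩ := hf A
  obtain ⟨K, hK⟩ := Metric.cauchySeq_iff.1 hs.cauchySeq ε hε
  have := hK (b (K + 1)) ((Nat.le_succ K).trans hmono.le_apply) (b K) hmono.le_apply
  rw [dist_eq_norm, ← Finset.sum_Ico_eq_sub _ (hmono.monotone K.le_succ), hchunk] at this
  exact (hTnorm (b K)).not_gt this

/-- A subseries is half the sum of the series and of a sign change of it, so the series converges
unconditionally, and bounded multipliers preserve unconditional convergence. -/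
theorem converges_mul_of_forall_signs [NormedSpace ℝ X] {v : ℕ → X} {a : ℕ → ℝ}
    (hsign : ∀ θ, IsSigns θ → Converges fun n => (θ n * a n) • v n) {r : ℕ → ℝ} {M : ℝ}
    (hr : ∀ᶠ n in atTop, |r n| ≤ M) : Converges fun n => (r n * a n) • v n := by
  classical
  have hsum : Summable fun n => a n • v n := by
    refine summable_of_forall_converges_indicator fun A => ?_
    have h := ((hsign 1 fun _ => Or.inl rfl).add (hsign (fun n => if n ∈ A then 1 else -1)
      fun n => by by_cases hn : n ∈ A <;> simp [hn])).const_smul (1 / 2 : ℝ)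
    refine h.congr_eventually (Eventually.of_forall fun n => ?_)
    by_cases hn : n ∈ A
    · simp only [Pi.one_apply, hn, if_true, Set.indicator_of_mem hn, ← smul_add]
      module
    · simp only [Pi.one_apply, hn, if_false, Set.indicator_of_notMem hn]
      module
  set r' : ℕ → ℝ := fun n => if |r n| ≤ M then r n else 0
  have hr' : ∀ n, |r' n| ≤ max M 0 := fun n => by
    by_cases h : |r n| ≤ M
    · simp only [r', if_pos h]; exact h.trans (le_max_left _ _)
    · simp [r', if_neg h]
  refine (hsum.smul_of_abs_le hr').hasSum.converges.congr_eventually ?_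
  filter_upwards [hr] with n hn
  simp only [r', if_pos hn, smul_smul]

end Subseries

theorem ContinuousLinearMap.apply_eq_sum_of_tendsto {X Y : Type*} [NormedAddCommGroup X]
    [NormedSpace ℝ X] [NormedAddCommGroup Y] [NormedSpace ℝ Y] (φ : X →L[ℝ] Y) {v : ℕ → X}
    {σ : X} (hσ : Tendsto (fun N => ∑ n ∈ Finset.range N, v n) atTop (𝓝 σ)) (s : Finset ℕ)
    (hs : ∀ n ∉ s, φ (v n) = 0) : φ σ = ∑ n ∈ s, φ (v n) :=
  tendsto_nhds_unique (((φ.continuous.tendsto σ).comp hσ).congr fun N => by simp)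
    (hasSum_sum_of_ne_finset_zero hs).tendsto_sum_nat

def IsSuccessive (U : ℕ → Set ℕ) : Prop :=
  ∀ n, ∀ i ∈ U n, ∀ j ∈ U (n + 1), i < j

namespace IsSuccessive

variable {U : ℕ → Set ℕ}

theorem lt (hU : IsSuccessive U) (hne : ∀ n, (U n).Nonempty) {m n : ℕ} (hmn : m < n)
    {i j : ℕ} (hi : i ∈ U m) (hj : j ∈ U n) : i < j := by
  induction n generalizing j with
  | zero => omega
  | succ n ih =>
    rcases Nat.lt_succ_iff_lt_or_eq.1 hmn with h | rfl
    · obtain ⟨k, hk⟩ := hne n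
      exact (ih h hk).trans (hU n k hk j hj)
    · exact hU m i hi j hj

theorem disjoint (hU : IsSuccessive U) (hne : ∀ n, (U n).Nonempty) {m n : ℕ} (hmn : m ≠ n) :
    Disjoint (U m) (U n) :=
  Set.disjoint_left.2 fun i him hin => by
    rcases Nat.lt_or_gt_of_ne hmn with h | h
    · exact lt_irrefl i (hU.lt hne h him hin)
    · exact lt_irrefl i (hU.lt hne h hin him)

theorem mono {V : ℕ → Set ℕ} (hU : IsSuccessive U) (hVU : ∀ n, V n ⊆ U n) : IsSuccessive V :=
  fun n i hi j hj => hU n i (hVU n hi) j (hVU (n + 1) hj)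

end IsSuccessive

namespace SchauderBasisOld

variable {X : Type*} [NormedAddCommGroup X] [NormedSpace ℝ X] (b : SchauderBasisOld X)

theorem coord_eq_zero_of_notMem_supp {v : X} {j : ℕ} (hj : j ∉ b.supp v) : b.coord j v = 0 :=
  not_not.1 hj

theorem supp_add_subset (u v : X) : b.supp (u + v) ⊆ b.supp u ∪ b.supp v := fun j hj => by
  by_contra h
  simp only [Set.mem_union, not_or] at h
  exact hj (by rw [map_add, b.coord_eq_zero_of_notMem_supp h.1,
    b.coord_eq_zero_of_notMem_supp h.2, add_zero])

theorem supp_smul_subset (c : ℝ) (v : X) : b.supp (c • v) ⊆ b.supp v := fun j hj h =>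
  hj (by rw [map_smul, h, smul_zero])

theorem supp_smul_add_subset (c t : ℝ) (u v : X) :
    b.supp (c • (u + t • v)) ⊆ b.supp u ∪ b.supp v :=
  (b.supp_smul_subset _ _).trans ((b.supp_add_subset _ _).trans
    (Set.union_subset_union_right _ (b.supp_smul_subset _ _)))

theorem sum_coord_smul_eq {v : X} {N : ℕ} (hv : ∀ j ∈ b.supp v, j < N) :
    ∑ j ∈ Finset.range N, b.coord j v • b.e j = v :=
  tendsto_nhds_unique (hasSum_sum_of_ne_finset_zero fun j hj => by
      rw [b.coord_eq_zero_of_notMem_supp fun h => hj (Finset.mem_range.2 (hv j h)), zero_smul]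
    ).tendsto_sum_nat (b.expansion v)

theorem supp_nonempty {v : X} (hv : v ≠ 0) : (b.supp v).Nonempty :=
  Set.nonempty_iff_ne_empty.2 fun h => hv (by simpa using (b.sum_coord_smul_eq (v := v) (N := 0)
    fun j hj => by simp [h] at hj).symm)

theorem apply_eq_zero_of_disjoint {Y : Type*} [NormedAddCommGroup Y] [NormedSpace ℝ Y]
    (φ : X →L[ℝ] Y) {T : Set ℕ} (hφ : ∀ m ∉ T, φ (b.e m) = 0) {v : X} (hv : (b.supp v).Finite)
    (hvT : Disjoint (b.supp v) T) : φ v = 0 := by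
  obtain ⟨M, hM⟩ := hv.bddAbove
  rw [← b.sum_coord_smul_eq fun j hj => Nat.lt_succ_of_le (hM hj), map_sum]
  refine Finset.sum_eq_zero fun j _ => ?_
  by_cases hj : j ∈ b.supp v
  · rw [map_smul, hφ j (Set.disjoint_left.1 hvT hj), smul_zero]
  · rw [b.coord_eq_zero_of_notMem_supp hj, zero_smul, map_zero]

def mulPartialSum (θ : ℕ → ℝ) (N : ℕ) : X →L[ℝ] X :=
  ∑ j ∈ Finset.range N, (b.coord j).smulRight (θ j • b.e j)

theorem mulPartialSum_apply (θ : ℕ → ℝ) (N : ℕ) (z : X) :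
    b.mulPartialSum θ N z = ∑ j ∈ Finset.range N, b.coord j z • θ j • b.e j := by
  simp [mulPartialSum]

theorem mulPartialSum_congr (θ : ℕ → ℝ) {N : ℕ} {z z' : X}
    (h : ∀ j < N, b.coord j z = b.coord j z') :
    b.mulPartialSum θ N z = b.mulPartialSum θ N z' := by
  simp only [mulPartialSum_apply]
  exact Finset.sum_congr rfl fun j hj => by rw [h j (Finset.mem_range.1 hj)]

theorem mulPartialSum_eq_smul {θ : ℕ → ℝ} {N : ℕ} {c : ℝ} {v : X}
    (hv : ∀ j ∈ b.supp v, j < N ∧ θ j = c) : b.mulPartialSum θ N v = c • v := by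
  conv_rhs => rw [← b.sum_coord_smul_eq fun j hj => (hv j hj).1]
  rw [mulPartialSum_apply, Finset.smul_sum]
  refine Finset.sum_congr rfl fun j _ => ?_
  by_cases hj : j ∈ b.supp v
  · rw [(hv j hj).2, smul_comm]
  · simp [b.coord_eq_zero_of_notMem_supp hj]

end SchauderBasisOld

namespace SchauderBasisOld.IsBlockSeq

variable {X : Type*} [NormedAddCommGroup X] [NormedSpace ℝ X] {b : SchauderBasisOld X}
  {x : ℕ → X}

theorem ne_zero (hx : b.IsBlockSeq x) (n : ℕ) : x n ≠ 0 := fun h => by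
  simpa [h] using hx.1 n

theorem supp_nonempty (hx : b.IsBlockSeq x) (n : ℕ) : (b.supp (x n)).Nonempty :=
  b.supp_nonempty (hx.ne_zero n)

theorem isSuccessive (hx : b.IsBlockSeq x) : IsSuccessive fun n => b.supp (x n) :=
  hx.2.2

theorem eq_of_mem_supp (hx : b.IsBlockSeq x) {m n j : ℕ} (hm : j ∈ b.supp (x m))
    (hn : j ∈ b.supp (x n)) : m = n := by
  by_contra hmn
  exact Set.disjoint_left.1 (hx.isSuccessive.disjoint hx.supp_nonempty hmn) hm hn

theorem lt_sInf_supp (hx : b.IsBlockSeq x) {m N i : ℕ} (hmN : m < N) (hi : i ∈ b.supp (x m)) :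
    i < sInf (b.supp (x N)) :=
  hx.isSuccessive.lt hx.supp_nonempty hmN hi (Nat.sInf_mem (hx.supp_nonempty N))

theorem sInf_supp_le (hx : b.IsBlockSeq x) {m N i : ℕ} (hNm : N ≤ m) (hi : i ∈ b.supp (x m)) :
    sInf (b.supp (x N)) ≤ i := by
  rcases hNm.eq_or_lt with rfl | h
  · exact Nat.sInf_le hi
  · exact (hx.isSuccessive.lt hx.supp_nonempty h (Nat.sInf_mem (hx.supp_nonempty N)) hi).le

theorem tendsto_sInf_supp (hx : b.IsBlockSeq x) :
    Tendsto (fun N => sInf (b.supp (x N))) atTop atTop :=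
  (strictMono_nat_of_lt_succ fun N =>
    hx.lt_sInf_supp N.lt_succ_self (Nat.sInf_mem (hx.supp_nonempty N))).tendsto_atTop

/-- The sign `θ n` is spread over the support of `x n`; the partial sums of the signed block series
are then partial sums of the signed basis expansion of its sum, cut where a block starts. -/
theorem converges_sign_mul (hu : b.Unconditional) (hx : b.IsBlockSeq x) {a θ : ℕ → ℝ}
    (ha : Converges fun n => a n • x n) (hθ : IsSigns θ) :
    Converges fun n => (θ n * a n) • x n := by
  classical
  obtain ⟨σ, hσ⟩ := ha
  set θ' : ℕ → ℝ := fun j => if h : ∃ n, j ∈ b.supp (x n) then θ h.choose else 1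
  have hθ'x : ∀ n, ∀ j ∈ b.supp (x n), θ' j = θ n := fun n j hj => by
    have h : ∃ n, j ∈ b.supp (x n) := ⟨n, hj⟩
    simp only [θ', dif_pos h, hx.eq_of_mem_supp h.choose_spec hj]
  have hθ' : IsSigns θ' := fun j => by
    by_cases h : ∃ n, j ∈ b.supp (x n)
    · simp only [θ', dif_pos h]; exact hθ _
    · simp [θ', h]
  have hpartial : ∀ N, b.mulPartialSum θ' (sInf (b.supp (x N))) σ =
      ∑ n ∈ Finset.range N, (θ n * a n) • x n := by
    intro N
    rw [b.mulPartialSum_congr θ' (z' := ∑ n ∈ Finset.range N, a n • x n) fun j hj => ?_, map_sum]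
    · refine Finset.sum_congr rfl fun n hn => ?_
      rw [map_smul, b.mulPartialSum_eq_smul fun j hj =>
        ⟨hx.lt_sInf_supp (Finset.mem_range.1 hn) hj, hθ'x n j hj⟩, smul_smul, mul_comm]
    · rw [(b.coord j).apply_eq_sum_of_tendsto hσ (Finset.range N) fun n hn => ?_, map_sum]
      rw [map_smul, b.coord_eq_zero_of_notMem_supp fun hjn => (hx.sInf_supp_le
        (not_lt.1 (Finset.mem_range.not.1 hn)) hjn).not_gt hj, smul_zero]
  obtain ⟨τ, hτ⟩ := (hu θ' hθ' fun j => b.coord j σ).2 ⟨σ, b.expansion σ⟩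
  exact ⟨τ, (hτ.comp hx.tendsto_sInf_supp).congr fun N => by
    simp only [Function.comp_apply, ← hpartial, mulPartialSum_apply]⟩

theorem converges_mul [CompleteSpace X] (hu : b.Unconditional) (hx : b.IsBlockSeq x)
    {a r : ℕ → ℝ} {M : ℝ} (ha : Converges fun n => a n • x n) (hr : ∀ᶠ n in atTop, |r n| ≤ M) :
    Converges fun n => (r n * a n) • x n :=
  converges_mul_of_forall_signs (fun _ hθ => hx.converges_sign_mul hu ha hθ) hr

theorem converges_of_converges_mul [CompleteSpace X] (hu : b.Unconditional)
    (hx : b.IsBlockSeq x) {a d : ℕ → ℝ} {δ : ℝ} (hδ : 0 < δ) (hd : ∀ᶠ n in atTop, δ ≤ |d n|)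
    (h : Converges fun n => (d n * a n) • x n) : Converges fun n => a n • x n := by
  refine (hx.converges_mul hu h (r := fun n => (d n)⁻¹) (M := δ⁻¹) ?_).congr_eventually ?_
  · filter_upwards [hd] with n hn
    rw [abs_inv]
    exact inv_anti₀ hδ hn
  · filter_upwards [hd] with n hn
    rw [inv_mul_cancel_left₀ (abs_pos.1 (hδ.trans_le hn))]

end SchauderBasisOld.IsBlockSeq

namespace SchauderBasisOld

variable {X : Type*} [NormedAddCommGroup X] [NormedSpace ℝ X] {b : SchauderBasisOld X}

variable (b) in
def IsBlockProjection (x : ℕ → X) (f : ℕ → X →L[ℝ] ℝ) (P : X →L[ℝ] X) : Prop :=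
  (∀ n, ∀ m, m ∉ b.supp (x n) → f n (b.e m) = 0) ∧
  (∀ z : X, Tendsto (fun N => ∑ n ∈ Finset.range N, f n z • x n) atTop (𝓝 (P z))) ∧
  ∀ n, P (x n) = x n

variable (b) in
def HasBlockProjections : Prop :=
  ∀ x : ℕ → X, b.IsBlockSeq x → ∃ f P, b.IsBlockProjection x f P

namespace IsBlockProjection

variable {x : ℕ → X} {f : ℕ → X →L[ℝ] ℝ} {P : X →L[ℝ] X}

theorem apply_eq_zero (h : b.IsBlockProjection x f P) {n : ℕ} {v : X} (hv : (b.supp v).Finite)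
    (hvx : Disjoint (b.supp v) (b.supp (x n))) : f n v = 0 :=
  b.apply_eq_zero_of_disjoint (f n) (h.1 n) hv hvx

theorem apply_self (h : b.IsBlockProjection x f P) (hx : b.IsBlockSeq x) (n : ℕ) :
    f n (x n) = 1 := by
  have hsingle : HasSum (fun m => f m (x n) • x m) (f n (x n) • x n) :=
    hasSum_single n fun m hm => by
      rw [h.apply_eq_zero (hx.2.1 n) (hx.isSuccessive.disjoint hx.supp_nonempty (Ne.symm hm)),
        zero_smul]
  have hfix : f n (x n) • x n = x n :=
    tendsto_nhds_unique hsingle.tendsto_sum_nat (by simpa only [h.2.2 n] using h.2.1 (x n))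
  exact smul_left_injective ℝ (hx.ne_zero n) (hfix.trans (one_smul ℝ _).symm)

theorem exists_abs_apply_le [CompleteSpace X] (h : b.IsBlockProjection x f P)
    (hx : ∀ n, ‖x n‖ = 1) : ∃ C, ∀ n z, |f n z| ≤ C * ‖z‖ := by
  set T : ℕ → X →L[ℝ] X := fun N => ∑ n ∈ Finset.range N, (f n).smulRight (x n)
  have hT : ∀ N z, T N z = ∑ n ∈ Finset.range N, f n z • x n := fun N z => by simp [T]
  obtain ⟨C, hC⟩ := banach_steinhaus fun z => by
    obtain ⟨C, hC⟩ := (h.2.1 z).norm.bddAbove_range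
    exact ⟨C, fun N => hT N z ▸ hC (Set.mem_range_self N)⟩
  refine ⟨2 * C, fun n z => ?_⟩
  calc |f n z| = ‖T (n + 1) z - T n z‖ := by
        rw [hT, hT, Finset.sum_range_succ, add_sub_cancel_left, norm_smul, hx, mul_one,
          Real.norm_eq_abs]
    _ ≤ C * ‖z‖ + C * ‖z‖ := (norm_sub_le _ _).trans
        (add_le_add ((T _).le_of_opNorm_le (hC _) z) ((T _).le_of_opNorm_le (hC _) z))
    _ = 2 * C * ‖z‖ := by ring

theorem tendsto_sum_of_tendsto_sum (h : b.IsBlockProjection x f P) {v : ℕ → X} {c : ℕ → ℝ}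
    {σ : X} (hσ : Tendsto (fun N => ∑ n ∈ Finset.range N, c n • v n) atTop (𝓝 σ))
    (hv : ∀ m n, m ≠ n → f n (v m) = 0) :
    Tendsto (fun N => ∑ n ∈ Finset.range N, (c n * f n (v n)) • x n) atTop (𝓝 (P σ)) := by
  refine (h.2.1 σ).congr fun N => Finset.sum_congr rfl fun n _ => ?_
  rw [(f n).apply_eq_sum_of_tendsto hσ {n} fun m hm => by
    rw [map_smul, hv m n (by simpa using hm), smul_zero]]
  simp

end IsBlockProjection

end SchauderBasisOld

theorem norm_add_smul_mem_Icc {X : Type*} [NormedAddCommGroup X] [NormedSpace ℝ X] {u v : X}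
    (hu : ‖u‖ = 1) (hv : ‖v‖ = 1) {t : ℝ} (ht : t ∈ Set.Icc (0 : ℝ) (1 / 2)) :
    ‖u + t • v‖ ∈ Set.Icc (1 / 2 : ℝ) (3 / 2) := by
  have htv : ‖t • v‖ = t := by rw [norm_smul, hv, mul_one, Real.norm_of_nonneg ht.1]
  have h1 := norm_sub_norm_le u (-(t • v))
  have h2 := norm_add_le u (t • v)
  rw [sub_neg_eq_add, norm_neg] at h1
  constructor <;> linarith [ht.2]

namespace SchauderBasisOld

variable {X : Type*} [NormedAddCommGroup X] [NormedSpace ℝ X] {b : SchauderBasisOld X}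

variable (b) in
def IsBlockPair (p q : ℕ → X) : Prop :=
  (∀ n, Disjoint (b.supp (p n)) (b.supp (q n))) ∧
    IsSuccessive fun n => b.supp (p n) ∪ b.supp (q n)

theorem IsBlockPair.symm {p q : ℕ → X} (h : b.IsBlockPair p q) : b.IsBlockPair q p :=
  ⟨fun n => (h.1 n).symm, by simpa only [Set.union_comm] using h.2⟩

theorem isBlockPair_of_interlaced {x y : ℕ → X} (hx : b.IsBlockSeq x) (hy : b.IsBlockSeq y)
    (hxy : ∀ n, (∀ i ∈ b.supp (x n), ∀ j ∈ b.supp (y n), i < j) ∧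
      (∀ j ∈ b.supp (y n), ∀ i ∈ b.supp (x (n + 1)), j < i)) :
    b.IsBlockPair x y := by
  refine ⟨fun n => Set.disjoint_left.2 fun i hix hiy => lt_irrefl i ((hxy n).1 i hix i hiy),
    fun n i hi j hj => ?_⟩
  obtain ⟨k, hk⟩ := hy.supp_nonempty n
  have hlt : ∀ l ∈ b.supp (x (n + 1)), i < l := fun l hl => by
    rcases hi with hi | hi
    · exact ((hxy n).1 i hi k hk).trans ((hxy n).2 k hk l hl)
    · exact (hxy n).2 i hi l hl
  rcases hj with hj | hj
  · exact hlt j hj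
  · obtain ⟨l, hl⟩ := hx.supp_nonempty (n + 1)
    exact (hlt l hl).trans ((hxy (n + 1)).1 l hl j hj)

variable {p q : ℕ → X}

theorem IsBlockPair.disjoint (h : b.IsBlockPair p q) (hp : b.IsBlockSeq p) {m n : ℕ}
    (hmn : m ≠ n) : Disjoint (b.supp (p m) ∪ b.supp (q m)) (b.supp (p n) ∪ b.supp (q n)) :=
  h.2.disjoint (fun n => (hp.supp_nonempty n).mono Set.subset_union_left) hmn

theorem IsBlockPair.isBlockSeq_normalize (hpq : b.IsBlockPair p q) (hp : b.IsBlockSeq p)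
    (hq : b.IsBlockSeq q) {t : ℕ → ℝ} (ht : ∀ n, t n ∈ Set.Icc (0 : ℝ) (1 / 2)) :
    b.IsBlockSeq fun n => ‖p n + t n • q n‖⁻¹ • (p n + t n • q n) := by
  refine ⟨fun n => ?_, fun n => ((hp.2.1 n).union (hq.2.1 n)).subset
    (b.supp_smul_add_subset _ _ _ _), hpq.2.mono fun n => b.supp_smul_add_subset _ _ _ _⟩
  have := (norm_add_smul_mem_Icc (hp.1 n) (hq.1 n) (ht n)).1
  rw [norm_smul, norm_inv, norm_norm, inv_mul_cancel₀ (by linarith)]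

theorem IsBlockPair.exists_converges_transfer [CompleteSpace X] (hP : b.HasBlockProjections)
    (hp : b.IsBlockSeq p) (hq : b.IsBlockSeq q) (hpq : b.IsBlockPair p q) {t : ℕ → ℝ}
    (ht : ∀ n, t n ∈ Set.Icc (0 : ℝ) (1 / 2)) {c : ℕ → ℝ} (hc : Converges fun n => c n • p n) :
    ∃ (f : ℕ → X →L[ℝ] ℝ) (C : ℝ), (∀ n z, |f n z| ≤ C * ‖z‖) ∧
      (∀ n, f n (p n) + t n * f n (q n) = ‖p n + t n • q n‖) ∧
      Converges fun n => (f n (p n) / ‖p n + t n • q n‖ * (c n * t n)) • q n := by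
  set ν : ℕ → ℝ := fun n => ‖p n + t n • q n‖
  have hν0 : ∀ n, ν n ≠ 0 := fun n => by
    linarith [(norm_add_smul_mem_Icc (hp.1 n) (hq.1 n) (ht n)).1]
  set w : ℕ → X := fun n => (ν n)⁻¹ • (p n + t n • q n)
  have hw : b.IsBlockSeq w := hpq.isBlockSeq_normalize hp hq ht
  have hwU : ∀ n, b.supp (w n) ⊆ b.supp (p n) ∪ b.supp (q n) := fun n =>
    b.supp_smul_add_subset _ _ _ _
  obtain ⟨f, P, hf⟩ := hP w hw
  obtain ⟨g, Q, hg⟩ := hP q hq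
  have hfp : ∀ m n, m ≠ n → f n (p m) = 0 := fun m n hmn => hf.apply_eq_zero (hp.2.1 m)
    ((hpq.disjoint hp hmn).mono Set.subset_union_left (hwU n))
  have hgw : ∀ m n, m ≠ n → g n (w m) = 0 := fun m n hmn => hg.apply_eq_zero (hw.2.1 m)
    ((hpq.disjoint hp hmn).mono (hwU m) Set.subset_union_right)
  have hgwn : ∀ n, g n (w n) = t n / ν n := fun n => by
    simp [w, hg.apply_eq_zero (hp.2.1 n) (hpq.1 n), hg.apply_self hq n, div_eq_inv_mul]
  obtain ⟨C, hC⟩ := hf.exists_abs_apply_le hw.1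
  refine ⟨f, C, hC, fun n => ?_, ?_⟩
  · have := hf.apply_self hw n
    rw [map_smul, map_add, map_smul, smul_eq_mul, smul_eq_mul, inv_mul_eq_one₀ (hν0 n)] at this
    exact this.symm
  · obtain ⟨s, hs⟩ := hc
    refine ⟨_, (hg.tendsto_sum_of_tendsto_sum (hf.tendsto_sum_of_tendsto_sum hs hfp) hgw).congr
      fun N => Finset.sum_congr rfl fun n _ => ?_⟩
    rw [hgwn]
    congr 1
    ring

theorem IsBlockPair.converges_mul_of_tendsto_zero [CompleteSpace X] (hu : b.Unconditional)
    (hP : b.HasBlockProjections) (hp : b.IsBlockSeq p) (hq : b.IsBlockSeq q)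
    (hpq : b.IsBlockPair p q) {t : ℕ → ℝ} (ht : ∀ n, t n ∈ Set.Icc (0 : ℝ) (1 / 2))
    (ht0 : Tendsto t atTop (𝓝 0)) {c : ℕ → ℝ} (hc : Converges fun n => c n • p n) :
    Converges fun n => (c n * t n) • q n := by
  obtain ⟨f, C, hC, hfpq, hconv⟩ := hpq.exists_converges_transfer hP hp hq ht hc
  have hν := fun n => norm_add_smul_mem_Icc (hp.1 n) (hq.1 n) (ht n)
  -- `C` depends on `t`, so only `t → 0` makes `t n * f n (q n)` small
  have hsmall : Tendsto (fun n => t n * f n (q n)) atTop (𝓝 0) :=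
    ht0.zero_mul_isBoundedUnder_le (isBoundedUnder_of ⟨C, fun n => by
      simpa [hq.1 n] using hC n (q n)⟩)
  refine hq.converges_of_converges_mul hu (δ := 1 / 6) (by norm_num) ?_ hconv
  filter_upwards [hsmall.eventually (ge_mem_nhds (show (0 : ℝ) < 1 / 4 by norm_num))] with n hn
  have hlarge : 1 / 4 ≤ f n (p n) := by
    linarith [hfpq n, (hν n).1, le_abs_self (t n * f n (q n))]
  rw [abs_of_nonneg (div_nonneg (by linarith) (by linarith [(hν n).1])),
    le_div_iff₀ (by linarith [(hν n).1])]
  linarith [(hν n).2]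

theorem IsBlockPair.converges [CompleteSpace X] (hu : b.Unconditional)
    (hP : b.HasBlockProjections) (hp : b.IsBlockSeq p) (hq : b.IsBlockSeq q)
    (hpq : b.IsBlockPair p q) {a : ℕ → ℝ} (ha : Converges fun n => a n • p n) :
    Converges fun n => a n • q n := by
  obtain ⟨u, hu_top, hua⟩ := ha.exists_tendsto_atTop_smul
  set u' : ℕ → ℝ := fun n => max (u n) 2
  have hu' : ∀ n, u' n ≠ 0 := fun n => by positivity
  have hu'a : Converges fun n => (u' n * a n) • p n := hua.congr_eventually <| by
    filter_upwards [hu_top.eventually_ge_atTop 2] with n hn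
    simp only [u', max_eq_left hn, smul_smul]
  refine (hpq.converges_mul_of_tendsto_zero hu hP hp hq (t := fun n => (u' n)⁻¹)
    (fun n => ⟨by positivity, inv_le_of_inv_le₀ (by norm_num) (by simp [u'])⟩)
    (tendsto_inv_atTop_zero.comp (tendsto_atTop_mono (fun n => le_max_left _ _) hu_top))
    hu'a).congr_eventually (Eventually.of_forall fun n => ?_)
  rw [mul_comm (u' n), mul_inv_cancel_right₀ (hu' n)]

end SchauderBasisOld

theorem complemented_blocks_imp_interlaced_equivalent
    {X : Type*} [NormedAddCommGroup X] [NormedSpace ℝ X] [CompleteSpace X]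
    (b : SchauderBasisOld X) (hu : b.Unconditional)
    (hcompl : ∀ x : ℕ → X, b.IsBlockSeq x →
      ∃ (f : ℕ → X →L[ℝ] ℝ) (P : X →L[ℝ] X),
        (∀ n, ∀ m, m ∉ b.supp (x n) → f n (b.e m) = 0) ∧
        (∀ z : X, Filter.Tendsto (fun N => ∑ n ∈ Finset.range N, f n z • x n)
          Filter.atTop (nhds (P z))) ∧
        (∀ n, P (x n) = x n)) :
    ∀ x y : ℕ → X, b.IsBlockSeq x → b.IsBlockSeq y →
      (∀ n, (∀ i ∈ b.supp (x n), ∀ j ∈ b.supp (y n), i < j) ∧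
            (∀ j ∈ b.supp (y n), ∀ i ∈ b.supp (x (n+1)), j < i)) →
      SeqEquiv x y := by
  intro x y hx hy hxy a
  have hpair := SchauderBasisOld.isBlockPair_of_interlaced hx hy hxy
  exact ⟨hpair.converges hu hcompl hx hy, hpair.symm.converges hu hcompl hy hx⟩
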